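/- Let K ≥ 1 and k = 2^K. Consider n agents with signals s : Fin n → ℕ in {0,…,k−1}, m items, and for each agent i and subset T of the items a valuation v_{iT} : (Fin n → ℝ) → ℝ that is strong-SOS, nonnegative on nonnegative vectors, and weakly increasing in each coordinate. Let W* = max over allocations T of Σ_i v_{iT_i}(s). Let RB = (1/K)·Σ_{ℓ=1}^{K} max over allocations S of Σ_{i ∈ N_{B_ℓ}} v_{iS_i}(s̄^ℓ), where N_{B_ℓ} = {i : s_i ≥ 2^{ℓ−1}} and s̄^ℓ(j) = min(s_j, 2^{ℓ−1}); and let RS = (1/2ⁿ)·Σ_{B ⊆ Fin n} max over allocations S of Σ_{i∈B} v_{iS_i}( s|_{Bᶜ} ). Then (K/(K+2))·RB + (2/(K+2))·RS ≥ W*/(2K+4). Hence the mechanism running Random Bucket with probability log₂(k)/(log₂(k)+2) and Random Sampling otherwise gives a (2·log₂(k)+4)-approximation to the optimal social welfare. -/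

import Mathlib

/-- `v` is a strongly-submodular-over-signals (strong-SOS) valuation when this
holds with `d = 1`. -/
def dStrongSOS {n : ℕ} (d : ℝ) (v : (Fin n → ℝ) → ℝ) : Prop :=
  ∀ (j : Fin n) (δ : ℝ), 0 ≤ δ →
    ∀ t t' : Fin n → ℝ, (∀ l, 0 ≤ t' l) → (∀ l, t' l ≤ t l) →
      d * (v (Function.update t' j (t' j + δ)) - v t') ≥
        v (Function.update t j (t j + δ)) - v t

/-- An allocation of the `m` items to the `n` agents: disjoint bundles. -/
def IsAlloc {n m : ℕ} (T : Fin n → Finset (Fin m)) : Prop :=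
  ∀ i j : Fin n, i ≠ j → Disjoint (T i) (T j)

/-- Supremum of `f` over all allocations of the `m` items to the `n` agents. -/
noncomputable def allocSup {n m : ℕ} (f : (Fin n → Finset (Fin m)) → ℝ) : ℝ :=
  ⨆ T : {T : Fin n → Finset (Fin m) // IsAlloc T}, f T.1

section Aux
variable {n m : ℕ}

lemma isAlloc_empty : IsAlloc (fun _ : Fin n => (∅ : Finset (Fin m))) :=
  fun _ _ _ => Finset.disjoint_empty_left _

instance : Nonempty {T : Fin n → Finset (Fin m) // IsAlloc T} := ⟨⟨_, isAlloc_empty⟩⟩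

lemma le_allocSup (f : (Fin n → Finset (Fin m)) → ℝ) (T : Fin n → Finset (Fin m))
    (hT : IsAlloc T) : f T ≤ allocSup f :=
  le_ciSup (f := fun T : {T // IsAlloc T} => f T.1)
    (Set.Finite.bddAbove (Set.finite_range _)) ⟨T, hT⟩

lemma allocSup_le {f : (Fin n → Finset (Fin m)) → ℝ} {x : ℝ}
    (h : ∀ T, IsAlloc T → f T ≤ x) : allocSup f ≤ x :=
  ciSup_le fun T => h T.1 T.2

lemma superadd {v : (Fin n → ℝ) → ℝ} (hv : dStrongSOS 1 v)
    (t t' w : Fin n → ℝ) (h0 : ∀ l, 0 ≤ t' l) (hle : ∀ l, t' l ≤ t l)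
    (hw : ∀ l, 0 ≤ w l) :
    v (fun l => t l + w l) - v t ≤ v (fun l => t' l + w l) - v t' := by
  classical
  have aux : ∀ F : Finset (Fin n),
      v (fun l => t l + if l ∈ F then w l else 0) - v t ≤
      v (fun l => t' l + if l ∈ F then w l else 0) - v t' := by
    intro F
    induction F using Finset.induction_on with
    | empty => simp
    | @insert j F hj ih =>
      have key : ∀ u : Fin n → ℝ,
          (fun l => u l + if l ∈ insert j F then w l else 0) =
          Function.update (fun l => u l + if l ∈ F then w l else 0) j
            ((fun l => u l + if l ∈ F then w l else 0) j + w j) := by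
        intro u; funext l
        rcases eq_or_ne l j with rfl | hne
        · simp [Function.update_self, hj]
        · simp [Function.update_apply, hne]
      have h1 := hv j (w j) (hw j) (fun l => t l + if l ∈ F then w l else 0)
        (fun l => t' l + if l ∈ F then w l else 0)
        (fun l => add_nonneg (h0 l) (by by_cases h : l ∈ F <;> simp [h, hw l]))
        (fun l => add_le_add_left (hle l) _)
      rw [key t, key t']
      simp only [one_mul, ge_iff_le] at h1
      linarith
  have h := aux Finset.univ
  simpa using h

end Aux

/-- Theorem 6.6 (thm:k-sig-ssm): with `k = 2^K`, signals `s i ∈ {0,…,k−1}`,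
and strong-SOS valuations (nonnegative on nonnegative vectors, weakly
increasing in each coordinate), running Random Bucket with probability
`K/(K+2) = log₂(k)/(log₂(k)+2)` and Random Sampling otherwise yields expected
welfare at least `W*/(2K+4)`, a `(2·log₂ k + 4)`-approximation to the optimal
welfare `W*`. -/
theorem k_signals_strong_sos (K : ℕ) (hK : 1 ≤ K) (n m : ℕ)
    (s : Fin n → ℕ) (hs : ∀ i, s i ≤ 2 ^ K - 1)
    (v : Fin n → Finset (Fin m) → (Fin n → ℝ) → ℝ)
    (hsos : ∀ i T, dStrongSOS 1 (v i T))
    (hpos : ∀ i T (t : Fin n → ℝ), (∀ l, 0 ≤ t l) → 0 ≤ v i T t)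
    (hmono : ∀ i T (t t' : Fin n → ℝ), (∀ l, t l ≤ t' l) → v i T t ≤ v i T t') :
    ((K : ℝ) / ((K : ℝ) + 2)) *
        ((1 / (K : ℝ)) * ∑ ℓ ∈ Finset.Icc 1 K,
          allocSup (fun S => ∑ i ∈ Finset.univ.filter (fun i => 2 ^ (ℓ - 1) ≤ s i),
            v i (S i) (fun j => ((min (s j) (2 ^ (ℓ - 1)) : ℕ) : ℝ))))
      + (2 / ((K : ℝ) + 2)) *
        ((1 / 2 ^ n : ℝ) * ∑ B ∈ (Finset.univ : Finset (Fin n)).powerset,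
          allocSup (fun S => ∑ i ∈ B,
            v i (S i) (fun j => if j ∈ B then 0 else (s j : ℝ))))
      ≥ allocSup (fun T => ∑ i, v i (T i) (fun j => (s j : ℝ)))
          / (2 * (K : ℝ) + 4) := by
  classical
  set st : Fin n → ℝ := fun j => ((s j : ℕ) : ℝ) with hst
  -- an optimal allocation
  obtain ⟨Tm, hTm⟩ := Finite.exists_max
    (fun T : {T : Fin n → Finset (Fin m) // IsAlloc T} => ∑ i, v i (T.1 i) st)
  set W : ℝ := ∑ i, v i (Tm.1 i) st with hWdef
  have hWle : allocSup (fun T => ∑ i, v i (T i) st) ≤ W :=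
    allocSup_le fun T hT => hTm ⟨T, hT⟩
  set smin : Fin n → (Fin n → ℝ) := fun i j => if j = i then 0 else ((s j : ℕ) : ℝ)
    with hsmin
  have hst0 : ∀ j, (0:ℝ) ≤ st j := fun j => Nat.cast_nonneg _
  have hsmin0 : ∀ i j, (0:ℝ) ≤ smin i j := by
    intro i j; by_cases h : j = i <;> simp [hsmin, h]
  -- per-agent bucket bound
  have bucket : ∀ i : Fin n, s i ≠ 0 →
      v i (Tm.1 i) st - v i (Tm.1 i) (smin i) ≤
        2 * v i (Tm.1 i)
          (fun j => ((min (s j) (2 ^ (Nat.log 2 (s i))) : ℕ) : ℝ)) := by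
    intro i hi
    set c : ℕ := 2 ^ Nat.log 2 (s i) with hc
    have hcle : c ≤ s i := Nat.pow_log_le_self 2 hi
    have hlt : s i < 2 * c := by
      have h := Nat.lt_pow_succ_log_self (by norm_num : 1 < 2) (s i)
      calc s i < 2 ^ (Nat.log 2 (s i) + 1) := h
        _ = 2 * c := by rw [hc, pow_succ, mul_comm]
    have hv := hsos i (Tm.1 i)
    set u : Fin n → ℝ := fun j => if j = i then 0 else ((min (s j) c : ℕ) : ℝ) with hu
    set a : Fin n → ℝ := fun j => ((min (s j) c : ℕ) : ℝ) with ha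
    set b : Fin n → ℝ := fun j =>
      if j = i then ((s i : ℕ) : ℝ) else ((min (s j) c : ℕ) : ℝ) with hb
    set d : Fin n → ℝ := fun j =>
      if j = i then ((s i : ℕ) : ℝ) - (c : ℝ) else ((min (s j) c : ℕ) : ℝ) with hd
    have hu0 : ∀ l, (0:ℝ) ≤ u l := by
      intro l; by_cases h : l = i <;> simp [hu, h]
    have hmini : min (s i) c = c := min_eq_right hcle
    -- step 1
    have s1 : v i (Tm.1 i) st - v i (Tm.1 i) (smin i) ≤
        v i (Tm.1 i) b - v i (Tm.1 i) u := by
      have e1 : (fun l => smin i l + (if l = i then ((s i : ℕ) : ℝ) else 0)) = st := by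
        funext l; by_cases h : l = i <;> simp [hsmin, hst, h]
      have e2 : (fun l => u l + (if l = i then ((s i : ℕ) : ℝ) else 0)) = b := by
        funext l; by_cases h : l = i <;> simp [hu, hb, h]
      have h := superadd hv (smin i) u (fun l => if l = i then ((s i : ℕ) : ℝ) else 0)
        hu0
        (by intro l; by_cases h : l = i <;> simp [hu, hsmin, h])
        (by intro l; by_cases h : l = i <;> simp [h])
      rw [e1, e2] at h
      exact h
    -- step 2
    have s2 : v i (Tm.1 i) b - v i (Tm.1 i) a ≤
        v i (Tm.1 i) d - v i (Tm.1 i) u := by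
      have e1 : (fun l => a l + (if l = i then ((s i : ℕ) : ℝ) - (c : ℝ) else 0)) = b := by
        have hcr : ((c : ℕ) : ℝ) ≤ ((s i : ℕ) : ℝ) := by exact_mod_cast hcle
        funext l; by_cases h : l = i
        · simp only [ha, hb, h, if_pos rfl]
          push_cast
          rw [min_eq_right hcr]
          ring
        · simp [ha, hb, h]
      have e2 : (fun l => u l + (if l = i then ((s i : ℕ) : ℝ) - (c : ℝ) else 0)) = d := by
        funext l; by_cases h : l = i <;> simp [hu, hd, h]
      have h := superadd hv a u (fun l => if l = i then ((s i : ℕ) : ℝ) - (c : ℝ) else 0)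
        hu0
        (by intro l; by_cases h : l = i <;> simp [hu, ha, h])
        (by intro l; by_cases h : l = i <;> simp [h]
            exact_mod_cast hcle)
      rw [e1, e2] at h
      exact h
    -- step 3
    have s3 : v i (Tm.1 i) d ≤ v i (Tm.1 i) a := by
      apply hmono
      intro l; by_cases h : l = i
      · subst h
        simp only [hd, ha, if_pos rfl, hmini]
        have : ((s l : ℕ) : ℝ) < 2 * (c : ℝ) := by exact_mod_cast hlt
        linarith
      · simp [hd, ha, h]
    have hu0' : 0 ≤ v i (Tm.1 i) u := hpos _ _ _ hu0
    linarith
  -- bucket sum bound for each ℓ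
  have hbucketSum : ∀ ℓ ∈ Finset.Icc 1 K,
      ∑ i ∈ Finset.univ.filter (fun i => s i ≠ 0 ∧ Nat.log 2 (s i) + 1 = ℓ),
        (v i (Tm.1 i) st - v i (Tm.1 i) (smin i)) ≤
      2 * allocSup (fun S => ∑ i ∈ Finset.univ.filter (fun i => 2 ^ (ℓ - 1) ≤ s i),
            v i (S i) (fun j => ((min (s j) (2 ^ (ℓ - 1)) : ℕ) : ℝ))) := by
    intro ℓ hℓ
    have step1 : ∑ i ∈ Finset.univ.filter (fun i => s i ≠ 0 ∧ Nat.log 2 (s i) + 1 = ℓ),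
        (v i (Tm.1 i) st - v i (Tm.1 i) (smin i)) ≤
        2 * ∑ i ∈ Finset.univ.filter (fun i => s i ≠ 0 ∧ Nat.log 2 (s i) + 1 = ℓ),
          v i (Tm.1 i) (fun j => ((min (s j) (2 ^ (ℓ - 1)) : ℕ) : ℝ)) := by
      rw [Finset.mul_sum]
      apply Finset.sum_le_sum
      intro i hi
      rw [Finset.mem_filter] at hi
      have hexp : ℓ - 1 = Nat.log 2 (s i) := by omega
      rw [hexp]
      exact bucket i hi.2.1
    have step2 : ∑ i ∈ Finset.univ.filter (fun i => s i ≠ 0 ∧ Nat.log 2 (s i) + 1 = ℓ),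
          v i (Tm.1 i) (fun j => ((min (s j) (2 ^ (ℓ - 1)) : ℕ) : ℝ)) ≤
        ∑ i ∈ Finset.univ.filter (fun i => 2 ^ (ℓ - 1) ≤ s i),
          v i (Tm.1 i) (fun j => ((min (s j) (2 ^ (ℓ - 1)) : ℕ) : ℝ)) := by
      apply Finset.sum_le_sum_of_subset_of_nonneg
      · intro x hx
        rw [Finset.mem_filter] at hx ⊢
        refine ⟨hx.1, ?_⟩
        obtain ⟨hx0, hxl⟩ := hx.2
        have : ℓ - 1 = Nat.log 2 (s x) := by omega
        rw [this]
        exact Nat.pow_log_le_self 2 hx0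
      · intro i _ _
        exact hpos _ _ _ (fun l => Nat.cast_nonneg _)
    have step3 : ∑ i ∈ Finset.univ.filter (fun i => 2 ^ (ℓ - 1) ≤ s i),
          v i (Tm.1 i) (fun j => ((min (s j) (2 ^ (ℓ - 1)) : ℕ) : ℝ)) ≤
        allocSup (fun S => ∑ i ∈ Finset.univ.filter (fun i => 2 ^ (ℓ - 1) ≤ s i),
            v i (S i) (fun j => ((min (s j) (2 ^ (ℓ - 1)) : ℕ) : ℝ))) :=
      le_allocSup (fun S => ∑ i ∈ Finset.univ.filter (fun i => 2 ^ (ℓ - 1) ≤ s i),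
        v i (S i) (fun j => ((min (s j) (2 ^ (ℓ - 1)) : ℕ) : ℝ))) Tm.1 Tm.2
    linarith
  -- fiberwise decomposition of the bucketed agents
  have hfiber : ∑ ℓ ∈ Finset.Icc 1 K,
      ∑ i ∈ Finset.univ.filter (fun i => s i ≠ 0 ∧ Nat.log 2 (s i) + 1 = ℓ),
        (v i (Tm.1 i) st - v i (Tm.1 i) (smin i)) =
      ∑ i ∈ Finset.univ.filter (fun i => s i ≠ 0),
        (v i (Tm.1 i) st - v i (Tm.1 i) (smin i)) := by
    rw [← Finset.sum_fiberwise_of_maps_to (g := fun i => Nat.log 2 (s i) + 1)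
      (t := Finset.Icc 1 K) (fun i hi => ?_)]
    · apply Finset.sum_congr rfl
      intro ℓ _
      apply Finset.sum_congr _ (fun _ _ => rfl)
      rw [Finset.filter_filter]
    · rw [Finset.mem_filter] at hi
      rw [Finset.mem_Icc]
      constructor
      · show 1 ≤ Nat.log 2 (s i) + 1
        omega
      · show Nat.log 2 (s i) + 1 ≤ K
        have h1 : s i < 2 ^ K := by
          have := hs i
          have h2 : (1:ℕ) ≤ 2 ^ K := Nat.one_le_two_pow
          omega
        have := Nat.log_lt_of_lt_pow hi.2 h1
        omega
  -- extend to all agents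
  have hextend : ∑ i ∈ Finset.univ.filter (fun i => s i ≠ 0),
        (v i (Tm.1 i) st - v i (Tm.1 i) (smin i)) =
      ∑ i, (v i (Tm.1 i) st - v i (Tm.1 i) (smin i)) := by
    apply Finset.sum_subset (Finset.filter_subset _ _)
    intro i _ hi
    rw [Finset.mem_filter] at hi
    have hi0 : s i = 0 := by
      by_contra h
      exact hi ⟨Finset.mem_univ i, h⟩
    have : smin i = st := by
      funext j; by_cases h : j = i
      · subst h; simp [hsmin, hst, hi0]
      · simp [hsmin, hst, h]
    rw [this, sub_self]
  -- sampling bound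
  have hsample : (2 ^ n : ℝ) / 4 * ∑ i, v i (Tm.1 i) (smin i) ≤
      ∑ B ∈ (Finset.univ : Finset (Fin n)).powerset,
        allocSup (fun S => ∑ i ∈ B,
          v i (S i) (fun j => if j ∈ B then 0 else ((s j : ℕ) : ℝ))) := by
    have hG : ∀ B ∈ (Finset.univ : Finset (Fin n)).powerset,
        ∑ i ∈ B, v i (Tm.1 i) (fun j => if j ∈ B then 0 else ((s j : ℕ) : ℝ)) ≤
        allocSup (fun S => ∑ i ∈ B,
          v i (S i) (fun j => if j ∈ B then 0 else ((s j : ℕ) : ℝ))) :=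
      fun B _ => le_allocSup (fun S => ∑ i ∈ B,
        v i (S i) (fun j => if j ∈ B then 0 else ((s j : ℕ) : ℝ))) Tm.1 Tm.2
    have swap : ∑ B ∈ (Finset.univ : Finset (Fin n)).powerset,
        ∑ i ∈ B, v i (Tm.1 i) (fun j => if j ∈ B then 0 else ((s j : ℕ) : ℝ)) =
        ∑ i, ∑ B ∈ (Finset.univ : Finset (Fin n)).powerset.filter (fun B => i ∈ B),
          v i (Tm.1 i) (fun j => if j ∈ B then 0 else ((s j : ℕ) : ℝ)) := by
      calc ∑ B ∈ (Finset.univ : Finset (Fin n)).powerset,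
            ∑ i ∈ B, v i (Tm.1 i) (fun j => if j ∈ B then 0 else ((s j : ℕ) : ℝ)) =
          ∑ B ∈ (Finset.univ : Finset (Fin n)).powerset, ∑ i : Fin n,
            (if i ∈ B then v i (Tm.1 i) (fun j => if j ∈ B then 0 else ((s j : ℕ) : ℝ))
              else 0) := by
            refine Finset.sum_congr rfl fun B _ => ?_
            rw [Finset.sum_ite_mem, Finset.univ_inter]
        _ = ∑ i : Fin n, ∑ B ∈ (Finset.univ : Finset (Fin n)).powerset,
            (if i ∈ B then v i (Tm.1 i) (fun j => if j ∈ B then 0 else ((s j : ℕ) : ℝ))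
              else 0) := Finset.sum_comm
        _ = ∑ i, ∑ B ∈ (Finset.univ : Finset (Fin n)).powerset.filter (fun B => i ∈ B),
            v i (Tm.1 i) (fun j => if j ∈ B then 0 else ((s j : ℕ) : ℝ)) := by
            refine Finset.sum_congr rfl fun i _ => (Finset.sum_filter _ _).symm
    have per : ∀ i : Fin n, (2 ^ n : ℝ) / 4 * v i (Tm.1 i) (smin i) ≤
        ∑ B ∈ (Finset.univ : Finset (Fin n)).powerset.filter (fun B => i ∈ B),
          v i (Tm.1 i) (fun j => if j ∈ B then 0 else ((s j : ℕ) : ℝ)) := by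
      intro i
      set filt := (Finset.univ : Finset (Fin n)).powerset.filter (fun B => i ∈ B)
        with hfilt
      set σ : Finset (Fin n) → Finset (Fin n) :=
        fun B => insert i (Finset.univ \ B) with hσ
      have hmemσ : ∀ B ∈ filt, σ B ∈ filt := by
        intro B hB
        simp [hfilt, hσ, Finset.mem_filter, Finset.mem_powerset]
      have hinv : ∀ B ∈ filt, σ (σ B) = B := by
        intro B hB
        rw [hfilt, Finset.mem_filter] at hB
        have hiB : i ∈ B := hB.2
        ext j
        by_cases h : j = i
        · subst h; simp [hσ, hiB]
        · simp [hσ, h]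
      have hre : ∑ B ∈ filt,
            v i (Tm.1 i) (fun j => if j ∈ σ B then 0 else ((s j : ℕ) : ℝ)) =
          ∑ B ∈ filt,
            v i (Tm.1 i) (fun j => if j ∈ B then 0 else ((s j : ℕ) : ℝ)) :=
        Finset.sum_nbij' σ σ hmemσ hmemσ hinv hinv (fun B _ => rfl)
      have pair : ∀ B ∈ filt, v i (Tm.1 i) (smin i) ≤
          v i (Tm.1 i) (fun j => if j ∈ B then 0 else ((s j : ℕ) : ℝ)) +
          v i (Tm.1 i) (fun j => if j ∈ σ B then 0 else ((s j : ℕ) : ℝ)) := by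
        intro B hB
        rw [hfilt, Finset.mem_filter] at hB
        have hiB : i ∈ B := hB.2
        have hv := hsos i (Tm.1 i)
        have e1 : (fun l => (if l ∈ B then (0:ℝ) else ((s l : ℕ) : ℝ)) +
            (if l ∈ σ B then (0:ℝ) else ((s l : ℕ) : ℝ))) = smin i := by
          funext j
          by_cases h : j = i
          · subst h; simp [hσ, hiB, hsmin]
          · by_cases hjB : j ∈ B <;> simp [hσ, h, hjB, hsmin]
        have e2 : (fun l => (0:ℝ) + (if l ∈ σ B then (0:ℝ) else ((s l : ℕ) : ℝ))) =
            (fun l => if l ∈ σ B then (0:ℝ) else ((s l : ℕ) : ℝ)) := by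
          funext l; simp
        have h := superadd hv (fun l => if l ∈ B then (0:ℝ) else ((s l : ℕ) : ℝ))
          (fun _ => 0) (fun l => if l ∈ σ B then (0:ℝ) else ((s l : ℕ) : ℝ))
          (fun l => le_refl 0)
          (by intro l; by_cases h : l ∈ B <;> simp [h])
          (by intro l; by_cases h : l ∈ σ B <;> simp [h])
        rw [e1, e2] at h
        have h0 : 0 ≤ v i (Tm.1 i) (fun _ => (0:ℝ)) := hpos _ _ _ (fun _ => le_refl 0)
        linarith
      have hcard : filt.card = 2 ^ (n - 1) := by
        have hc : filt.card = ((Finset.univ.erase i).powerset).card := by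
          apply Finset.card_nbij' (fun B => B.erase i) (fun R => insert i R)
          · intro B hB
            rw [hfilt, Finset.mem_coe, Finset.mem_filter] at hB
            rw [Finset.mem_coe, Finset.mem_powerset]
            exact Finset.erase_subset_erase i (Finset.subset_univ B)
          · intro R hR
            rw [Finset.mem_coe, Finset.mem_powerset] at hR
            rw [hfilt, Finset.mem_coe, Finset.mem_filter]
            exact ⟨Finset.mem_powerset.mpr (Finset.subset_univ _), Finset.mem_insert_self i R⟩
          · intro B hB
            rw [hfilt, Finset.mem_coe, Finset.mem_filter] at hB
            exact Finset.insert_erase hB.2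
          · intro R hR
            rw [Finset.mem_coe, Finset.mem_powerset] at hR
            apply Finset.erase_insert
            intro hiR
            exact (Finset.mem_erase.mp (hR hiR)).1 rfl
        rw [hc, Finset.card_powerset, Finset.card_erase_of_mem (Finset.mem_univ i),
          Finset.card_univ, Fintype.card_fin]
      have hsum := Finset.sum_le_sum pair
      rw [Finset.sum_const, hcard, Finset.sum_add_distrib, hre] at hsum
      have hn : 1 ≤ n := i.pos
      have hpow : ((2:ℝ)) ^ n = 2 * (2:ℝ) ^ (n - 1) := by
        rw [← pow_succ']
        congr 1
        omega
      rw [nsmul_eq_mul] at hsum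
      push_cast at hsum
      rw [hpow]
      linarith
    calc (2 ^ n : ℝ) / 4 * ∑ i, v i (Tm.1 i) (smin i)
        = ∑ i, (2 ^ n : ℝ) / 4 * v i (Tm.1 i) (smin i) := Finset.mul_sum _ _ _
      _ ≤ ∑ i, ∑ B ∈ (Finset.univ : Finset (Fin n)).powerset.filter (fun B => i ∈ B),
            v i (Tm.1 i) (fun j => if j ∈ B then 0 else ((s j : ℕ) : ℝ)) :=
          Finset.sum_le_sum fun i _ => per i
      _ = ∑ B ∈ (Finset.univ : Finset (Fin n)).powerset,
            ∑ i ∈ B, v i (Tm.1 i) (fun j => if j ∈ B then 0 else ((s j : ℕ) : ℝ)) :=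
          swap.symm
      _ ≤ _ := Finset.sum_le_sum hG
  -- put everything together
  set SA : ℝ := ∑ ℓ ∈ Finset.Icc 1 K,
      allocSup (fun S => ∑ i ∈ Finset.univ.filter (fun i => 2 ^ (ℓ - 1) ≤ s i),
        v i (S i) (fun j => ((min (s j) (2 ^ (ℓ - 1)) : ℕ) : ℝ))) with hSA
  set SS : ℝ := ∑ B ∈ (Finset.univ : Finset (Fin n)).powerset,
      allocSup (fun S => ∑ i ∈ B,
        v i (S i) (fun j => if j ∈ B then 0 else ((s j : ℕ) : ℝ))) with hSS
  have hA : ∑ i ∈ Finset.univ.filter (fun i => s i ≠ 0),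
      (v i (Tm.1 i) st - v i (Tm.1 i) (smin i)) ≤ 2 * SA := by
    rw [← hfiber, hSA, Finset.mul_sum]
    exact Finset.sum_le_sum hbucketSum
  have hdecomp : W = ∑ i ∈ Finset.univ.filter (fun i => s i ≠ 0),
      (v i (Tm.1 i) st - v i (Tm.1 i) (smin i)) + ∑ i, v i (Tm.1 i) (smin i) := by
    rw [hextend, ← Finset.sum_add_distrib]
    simp [hWdef]
  have h2n : (0:ℝ) < 2 ^ n := by positivity
  have hKpos : (0:ℝ) < K := by exact_mod_cast hK
  have hWbound : W ≤ 2 * SA + 4 / 2 ^ n * SS := by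
    have h1 : ∑ i, v i (Tm.1 i) (smin i) ≤ 4 / 2 ^ n * SS := by
      have h4 : (0:ℝ) ≤ 4 / 2 ^ n := by positivity
      have h2 := mul_le_mul_of_nonneg_left hsample h4
      have he : 4 / (2:ℝ) ^ n * (2 ^ n / 4 * ∑ i, v i (Tm.1 i) (smin i)) =
          ∑ i, v i (Tm.1 i) (smin i) := by
        field_simp
      rw [he] at h2
      exact h2
    linarith [hA, hdecomp.le, hdecomp.ge]
  rw [ge_iff_le]
  have hden : (0:ℝ) < 2 * (K:ℝ) + 4 := by linarith
  calc allocSup (fun T => ∑ i, v i (T i) st) / (2 * (K:ℝ) + 4)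
      ≤ W / (2 * (K:ℝ) + 4) := by gcongr
    _ ≤ (2 * SA + 4 / 2 ^ n * SS) / (2 * (K:ℝ) + 4) := by gcongr
    _ = (K : ℝ) / ((K : ℝ) + 2) * (1 / (K : ℝ) * SA)
        + 2 / ((K : ℝ) + 2) * ((1 / 2 ^ n : ℝ) * SS) := by
        field_simp
        ring
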